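/- Bound on the first-step replacement coefficient: let Q ∈ ℝ^{n×m} have orthonormal columns (QᵀQ = Iₘ), let u₀ ∈ ℝⁿ be s-sparse with support S, let δ ∈ [0,1] satisfy the principal-angle bound for sparsity level s with δ² < min{|u₀ₗ| : l ∈ S} / (2 ‖u₀‖₂), and let j₁ ∈ S. Set β = 1 − ‖Qᵀ e_{j₁}‖₂² and γ₁ = e_{j₁}ᵀ Q Qᵀ F_{S∖{j₁}}(u₀) / β. Then β > 1/2 and |γ₁| < |u₀_{j₁}|. -/

import Mathlib

open Matrix

/-- Euclidean (ℓ₂) norm of a finitely-indexed real vector. -/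
noncomputable def norm2 {ι : Type*} [Fintype ι] (v : ι → ℝ) : ℝ :=
  Real.sqrt (∑ i, v i ^ 2)

/-- A vector of `ℝⁿ` is `s`-sparse if it has at most `s` nonzero entries. -/
def Sparse {n : ℕ} (s : ℕ) (v : Fin n → ℝ) : Prop :=
  ∃ T : Finset (Fin n), T.card ≤ s ∧ ∀ i ∉ T, v i = 0

/-- `δ` satisfies the principal-angle bound for `Q` at sparsity level `s`:
`|⟨Qw, v⟩| ≤ δ ‖Qw‖₂ ‖v‖₂` for every `w` and every `s`-sparse `v`. -/
def PABound {n m : ℕ} (Q : Matrix (Fin n) (Fin m) ℝ) (s : ℕ) (δ : ℝ) : Prop :=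
  ∀ (w : Fin m → ℝ) (v : Fin n → ℝ), Sparse s v →
    |Q.mulVec w ⬝ᵥ v| ≤ δ * norm2 (Q.mulVec w) * norm2 v

/-- The `n × |S|` matrix `I_S` whose columns are the standard basis vectors `e_j`, `j ∈ S`. -/
def colSel {n : ℕ} (S : Finset (Fin n)) : Matrix (Fin n) {i // i ∈ S} ℝ :=
  Matrix.of fun i j => if i = (j : Fin n) then 1 else 0

/-- `F_S(a) = I_S I_Sᵀ a`: the vector agreeing with `a` on `S` and zero elsewhere. -/
def restrictVec {n : ℕ} (S : Finset (Fin n)) (a : Fin n → ℝ) : Fin n → ℝ :=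
  fun i => if i ∈ S then a i else 0

/-
Since `Q` has orthonormal columns, the principal-angle bound applied to `w = Qᵀv` gives
`‖Qᵀv‖₂ ≤ δ ‖v‖₂` for every `s`-sparse `v`. Hence `‖Qᵀe_{j₁}‖₂² ≤ δ²`, and
`|e_{j₁}ᵀ Q Qᵀ F_{S∖{j₁}}(u₀)| ≤ δ ‖Qᵀ F_{S∖{j₁}}(u₀)‖₂ ≤ δ² ‖u₀‖₂`. The recovery condition says
`2 δ² ‖u₀‖₂ < min_{l ∈ S} |u₀ₗ| ≤ |u₀_{j₁}| ≤ ‖u₀‖₂`, so `δ² < 1/2`, whence `β ≥ 1 − δ² > 1/2`,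
and the numerator of `γ₁` is below `|u₀_{j₁}| / 2 < β |u₀_{j₁}|`.
-/

section Norm2

variable {ι : Type*} [Fintype ι]

lemma norm2_nonneg (v : ι → ℝ) : 0 ≤ norm2 v := Real.sqrt_nonneg _

lemma norm2_sq (v : ι → ℝ) : norm2 v ^ 2 = v ⬝ᵥ v := by
  rw [norm2, Real.sq_sqrt (Finset.sum_nonneg fun i _ => sq_nonneg _)]
  simp only [dotProduct, sq]

lemma abs_le_norm2 (v : ι → ℝ) (i : ι) : |v i| ≤ norm2 v := by
  rw [← Real.sqrt_sq_eq_abs, norm2]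
  exact Real.sqrt_le_sqrt (Finset.single_le_sum (fun i _ => sq_nonneg (v i)) (Finset.mem_univ i))

lemma norm2_pi_single_one [DecidableEq ι] (j : ι) : norm2 (Pi.single j (1 : ℝ)) = 1 := by
  simp [norm2, Pi.single_apply]

lemma norm2_mulVec_of_transpose_mul_self {κ : Type*} [Fintype κ] [DecidableEq κ]
    {Q : Matrix ι κ ℝ} (hQ : Qᵀ * Q = 1) (x : κ → ℝ) : norm2 (Q *ᵥ x) = norm2 x := by
  have h : norm2 (Q *ᵥ x) ^ 2 = norm2 x ^ 2 := by
    rw [norm2_sq, norm2_sq, dotProduct_mulVec, ← mulVec_transpose, mulVec_mulVec, hQ, one_mulVec]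
  exact (pow_left_inj₀ (norm2_nonneg _) (norm2_nonneg _) two_ne_zero).1 h

end Norm2

section Sparse

variable {n : ℕ}

lemma norm2_restrictVec_le (S : Finset (Fin n)) (a : Fin n → ℝ) :
    norm2 (restrictVec S a) ≤ norm2 a := by
  refine Real.sqrt_le_sqrt (Finset.sum_le_sum fun i _ => ?_)
  by_cases hi : i ∈ S <;> simp [restrictVec, hi, sq_nonneg]

lemma sparse_restrictVec {s : ℕ} {S : Finset (Fin n)} (hS : S.card ≤ s) (a : Fin n → ℝ) :
    Sparse s (restrictVec S a) :=
  ⟨S, hS, fun _ hi => if_neg hi⟩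

lemma sparse_pi_single {s : ℕ} (hs : 1 ≤ s) (j : Fin n) (c : ℝ) : Sparse s (Pi.single j c) :=
  ⟨{j}, by simpa using hs, fun _ hi => Pi.single_eq_of_ne (Finset.notMem_singleton.1 hi) _⟩

end Sparse

namespace PABound

variable {n m s : ℕ} {Q : Matrix (Fin n) (Fin m) ℝ} {δ : ℝ}

lemma norm2_transpose_mulVec_le (hPA : PABound Q s δ) (hQ : Qᵀ * Q = 1) (hδ : 0 ≤ δ)
    {v : Fin n → ℝ} (hv : Sparse s v) : norm2 (Qᵀ *ᵥ v) ≤ δ * norm2 v := by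
  set q := Qᵀ *ᵥ v
  have h := hPA q v hv
  rw [dotProduct_comm, dotProduct_mulVec, ← mulVec_transpose, ← norm2_sq,
    norm2_mulVec_of_transpose_mul_self hQ, abs_of_nonneg (sq_nonneg _)] at h
  rcases (norm2_nonneg q).eq_or_lt with hq | hq
  · rw [← hq]
    exact mul_nonneg hδ (norm2_nonneg v)
  · nlinarith

lemma abs_dotProduct_mulVec_transpose_mulVec_le (hPA : PABound Q s δ) (hQ : Qᵀ * Q = 1)
    (hδ : 0 ≤ δ) {v w : Fin n → ℝ} (hv : Sparse s v) (hw : Sparse s w) :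
    |w ⬝ᵥ Q *ᵥ (Qᵀ *ᵥ v)| ≤ δ ^ 2 * norm2 v * norm2 w := by
  have h := hPA (Qᵀ *ᵥ v) w hw
  rw [norm2_mulVec_of_transpose_mul_self hQ, dotProduct_comm] at h
  calc |w ⬝ᵥ Q *ᵥ (Qᵀ *ᵥ v)| ≤ δ * norm2 (Qᵀ *ᵥ v) * norm2 w := h
    _ ≤ δ * (δ * norm2 v) * norm2 w := by
      gcongr
      · exact norm2_nonneg w
      · exact hPA.norm2_transpose_mulVec_le hQ hδ hv
    _ = δ ^ 2 * norm2 v * norm2 w := by ring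

end PABound

lemma two_mul_sq_mul_norm2_lt_of_lt_inf' {ι : Type*} [Fintype ι] {u : ι → ℝ} {S : Finset ι}
    (hS : S.Nonempty) {δ : ℝ} (h : δ ^ 2 < S.inf' hS (fun i => |u i|) / (2 * norm2 u))
    {j : ι} (hj : j ∈ S) : 2 * δ ^ 2 * norm2 u < |u j| := by
  have hu : 0 < norm2 u := by
    refine (norm2_nonneg u).lt_of_ne fun hu => ?_
    rw [← hu, mul_zero, div_zero] at h
    exact (sq_nonneg δ).not_gt h
  rw [lt_div_iff₀ (by positivity)] at h
  linarith [S.inf'_le (fun i => |u i|) hj]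

theorem stmt14_general {n m s : ℕ} (Q : Matrix (Fin n) (Fin m) ℝ) (hQ : Qᵀ * Q = 1)
    (δ : ℝ) (hδ0 : 0 ≤ δ) (hPA : PABound Q s δ)
    (u₀ : Fin n → ℝ) (S : Finset (Fin n))
    (hSne : S.Nonempty) (hcard : S.card ≤ s)
    (hbound : δ ^ 2 < S.inf' hSne (fun i => |u₀ i|) / (2 * norm2 u₀))
    (j₁ : Fin n) (hj₁ : j₁ ∈ S)
    (β : ℝ) (hβ : β = 1 - norm2 (Qᵀ.mulVec (Pi.single j₁ (1 : ℝ))) ^ 2)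
    (γ₁ : ℝ)
    (hγ₁ : γ₁ = (Pi.single j₁ (1 : ℝ) ⬝ᵥ
        Q.mulVec (Qᵀ.mulVec (restrictVec (S \ {j₁}) u₀))) / β) :
    1 / 2 < β ∧ |γ₁| < |u₀ j₁| := by
  have hrec := two_mul_sq_mul_norm2_lt_of_lt_inf' hSne hbound hj₁
  have hδ : δ ^ 2 < 1 / 2 := by nlinarith [abs_le_norm2 u₀ j₁, norm2_nonneg u₀]
  have hsingle : Sparse s (Pi.single j₁ (1 : ℝ)) :=
    sparse_pi_single (hSne.card_pos.trans_le hcard) _ _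
  have hβ' : 1 / 2 < β := by
    have h := hPA.norm2_transpose_mulVec_le hQ hδ0 hsingle
    rw [norm2_pi_single_one, mul_one] at h
    nlinarith [norm2_nonneg (Qᵀ *ᵥ Pi.single j₁ (1 : ℝ))]
  have hrestr : Sparse s (restrictVec (S \ {j₁}) u₀) :=
    sparse_restrictVec ((Finset.card_le_card S.sdiff_subset).trans hcard) u₀
  have hnum := hPA.abs_dotProduct_mulVec_transpose_mulVec_le hQ hδ0 hrestr hsingle
  rw [norm2_pi_single_one, mul_one] at hnum
  have hβpos : 0 < β := by linarith
  refine ⟨hβ', ?_⟩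
  rw [hγ₁, abs_div, abs_of_pos hβpos, div_lt_iff₀ hβpos]
  have hu := norm2_restrictVec_le (S \ {j₁}) u₀
  nlinarith [abs_nonneg (u₀ j₁)]

/-- Bound on the first-step replacement coefficient: for `j₁ ∈ S`, with
`β = 1 − ‖Qᵀ e_{j₁}‖₂²` and `γ₁ = e_{j₁}ᵀ Q Qᵀ F_{S∖{j₁}}(u₀) / β`, under the recovery
condition `δ² < min_{l ∈ S} |u₀ₗ| / (2‖u₀‖₂)` one has `β > 1/2` and `|γ₁| < |u₀_{j₁}|`. -/
theorem stmt14 {n m s : ℕ} (Q : Matrix (Fin n) (Fin m) ℝ) (hQ : Qᵀ * Q = 1)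
    (δ : ℝ) (hδ0 : 0 ≤ δ) (hδ1 : δ ≤ 1) (hPA : PABound Q s δ)
    (u₀ : Fin n → ℝ) (S : Finset (Fin n)) (hsupp : ∀ i, i ∈ S ↔ u₀ i ≠ 0)
    (hSne : S.Nonempty) (hcard : S.card ≤ s)
    (hbound : δ ^ 2 < S.inf' hSne (fun i => |u₀ i|) / (2 * norm2 u₀))
    (j₁ : Fin n) (hj₁ : j₁ ∈ S)
    (β : ℝ) (hβ : β = 1 - norm2 (Qᵀ.mulVec (Pi.single j₁ (1 : ℝ))) ^ 2)
    (γ₁ : ℝ)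
    (hγ₁ : γ₁ = (Pi.single j₁ (1 : ℝ) ⬝ᵥ
        Q.mulVec (Qᵀ.mulVec (restrictVec (S \ {j₁}) u₀))) / β) :
    1 / 2 < β ∧ |γ₁| < |u₀ j₁| :=
  stmt14_general Q hQ δ hδ0 hPA u₀ S hSne hcard hbound j₁ hj₁ β hβ γ₁ hγ₁
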